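/- Monotonicity of SAA bounds in sample size: E[v_{N+1}] ≤ E[v_N] for a maximization problem, i.e., the expected SAA optimal value is nonincreasing in the number of samples N and thus the statistical upper bound improves monotonically. -/

import Mathlib

/-!
Write the average of the `N + 1` samples as the average of its `N + 1` leave-one-out averages
of size `N`. The maximum of an average is at most the average of the maxima, and since the samples
are i.i.d., each leave-one-out maximum has the same expectation as `v_N`.
-/

open Finset

theorem Fin.sum_sum_succAbove {M : Type*} [AddCommGroup M] {n : ℕ} (f : Fin (n + 1) → M) :
    ∑ j : Fin (n + 1), ∑ i : Fin n, f (j.succAbove i) = n • ∑ i, f i := by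
  have h (j : Fin (n + 1)) : ∑ i : Fin n, f (j.succAbove i) = ∑ i, f i - f j := by
    rw [Fin.sum_univ_succAbove f j, add_sub_cancel_left]
  simp only [h, sum_sub_distrib, sum_const, succ_nsmul, add_sub_cancel_right]

theorem Fin.average_eq_average_leaveOneOut {n : ℕ} (hn : n ≠ 0) (f : Fin (n + 1) → ℝ) :
    1 / ((n : ℝ) + 1) * ∑ i, f i =
      1 / ((n : ℝ) + 1) * ∑ j : Fin (n + 1), 1 / (n : ℝ) * ∑ i : Fin n, f (j.succAbove i) := by
  rw [← mul_sum, Fin.sum_sum_succAbove, nsmul_eq_mul, one_div (n : ℝ),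
    inv_mul_cancel_left₀ (Nat.cast_ne_zero.mpr hn)]

theorem ciSup_sum_le {X ι : Type*} [Finite X] [Nonempty X] (s : Finset ι) (f : ι → X → ℝ) :
    ⨆ x, ∑ j ∈ s, f j x ≤ ∑ j ∈ s, ⨆ x, f j x :=
  ciSup_le fun x => sum_le_sum fun _ _ => le_ciSup (Set.finite_range _).bddAbove x

theorem iSup_average_le_average_iSup_leaveOneOut {X : Type*} [Finite X] [Nonempty X] {n : ℕ}
    (hn : n ≠ 0) (a : X → Fin (n + 1) → ℝ) :
    ⨆ x, 1 / ((n : ℝ) + 1) * ∑ i, a x i ≤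
      1 / ((n : ℝ) + 1) * ∑ j : Fin (n + 1), ⨆ x, 1 / (n : ℝ) * ∑ i : Fin n, a x (j.succAbove i) := by
  rw [iSup_congr fun x => Fin.average_eq_average_leaveOneOut hn (a x),
    ← Real.mul_iSup_of_nonneg (by positivity)]
  gcongr
  exact ciSup_sum_le _ _

theorem Fin.sum_prod_mul_comp_succAbove {Ω R : Type*} [Fintype Ω] [CommSemiring R] {n : ℕ}
    (p : Ω → R) (g : (Fin n → Ω) → R) (j : Fin (n + 1)) :
    ∑ s : Fin (n + 1) → Ω, (∏ i, p (s i)) * g (fun i => s (j.succAbove i)) =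
      (∑ ω, p ω) * ∑ t : Fin n → Ω, (∏ i, p (t i)) * g t := by
  rw [← (Fin.insertNthEquiv (fun _ => Ω) j).sum_comp, Fintype.sum_prod_type, sum_mul_sum]
  refine sum_congr rfl fun ω _ => sum_congr rfl fun t _ => ?_
  simp [Fin.insertNthEquiv, Fin.prod_univ_succAbove _ j, mul_assoc]

/-- Monotonicity of the SAA statistical upper bound in the sample size:
`E[v_{N+1}] ≤ E[v_N]` for a maximization problem, where
`v_N = max_{x∈X} (1/N) ∑_{i=1}^N φ(x, ω^i)` for i.i.d. samples from
a finite scenario set. -/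
theorem saa_bound_monotone {X Ω : Type*} [Fintype X] [Nonempty X] [Fintype Ω]
    (p : Ω → ℝ) (hp : ∀ ω, 0 ≤ p ω) (hpsum : ∑ ω, p ω = 1)
    (φ : X → Ω → ℝ) (N : ℕ) (hN : 0 < N) :
    (∑ s : Fin (N + 1) → Ω, (∏ i, p (s i)) *
        (⨆ x : X, (1 / ((N : ℝ) + 1)) * ∑ i, φ x (s i))) ≤
      ∑ s : Fin N → Ω, (∏ i, p (s i)) *
        (⨆ x : X, (1 / (N : ℝ)) * ∑ i, φ x (s i)) := by
  set v : (Fin N → Ω) → ℝ := fun t => ⨆ x : X, (1 / (N : ℝ)) * ∑ i, φ x (t i)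
  calc _ ≤ ∑ s : Fin (N + 1) → Ω, (∏ i, p (s i)) *
          (1 / ((N : ℝ) + 1) * ∑ j : Fin (N + 1), v (fun i => s (j.succAbove i))) := by
        gcongr with s
        · exact prod_nonneg fun i _ => hp (s i)
        · exact iSup_average_le_average_iSup_leaveOneOut hN.ne' fun x i => φ x (s i)
    _ = 1 / ((N : ℝ) + 1) * ∑ j : Fin (N + 1),
          ∑ s : Fin (N + 1) → Ω, (∏ i, p (s i)) * v (fun i => s (j.succAbove i)) := by
        simp only [mul_sum, mul_left_comm]
        exact sum_comm
    _ = ∑ t : Fin N → Ω, (∏ i, p (t i)) * v t := by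
        simp only [Fin.sum_prod_mul_comp_succAbove, hpsum, one_mul, sum_const, card_univ,
          Fintype.card_fin, nsmul_eq_mul]
        push_cast
        field_simp
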